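/- arXiv:2401.11618 — 5 statements merged into one kernel-verified Lean document; each statement's English description precedes it below -/
import Mathlib

section
/- Let h : ℝ^d → ℝ be three times continuously differentiable (class C³), let p ∈ ℝ^d and α ∈ [0,1] be fixed. Then the function v ↦ h(p) − (1−α)·h(p + α·v) − α·h(p − (1−α)·v) + (α(1−α)/2)·D²_v h(p) is O(‖v‖³) as v → 0 (in the sense of Asymptotics.IsBigO along the neighborhood filter of 0). -/
open Asymptotics Filter Metric Topology

/-!
Write `R(y) = h(y) - h(p) - Dh(p)(y - p) - ½ D²h(p)(y - p, y - p)` for the second-order Taylor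
remainder at `p`. The first-order terms of `R(p + αv)` and `R(p - (1 - α)v)` cancel in the
combination `-(1 - α) R(p + αv) - α R(p - (1 - α)v)`, and its second-order terms add up to
`α(1 - α)/2 · D²h(p)(v, v)`, so the expression is exactly this combination. Since `D²h` is
differentiable at `p`, `R(y) = O(‖y - p‖³)`: the mean value inequality turns
`D²h(y) - D²h(p) = O(‖y - p‖)` into a bound `O(‖y - p‖²)` for `DR`, and then into `O(‖y - p‖³)`
for `R`.
-/

section

variable {E F : Type*} [NormedAddCommGroup E] [NormedSpace ℝ E] [NormedAddCommGroup F]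

theorem Asymptotics.IsBigO.comp_add_smul {g : E → F} {x : E} {n : ℕ}
    (hg : g =O[𝓝 x] fun y => ‖y - x‖ ^ n) (c : ℝ) :
    (fun v => g (x + c • v)) =O[𝓝 0] fun v => ‖v‖ ^ n := by
  have hlim : Tendsto (fun v : E => x + c • v) (𝓝 0) (𝓝 x) := by
    simpa using ((continuous_const_smul c).const_add x).tendsto 0
  refine (hg.comp_tendsto hlim).trans (IsBigO.of_bound (‖c‖ ^ n) (Eventually.of_forall fun v => ?_))
  simp [norm_smul, mul_pow]

variable [NormedSpace ℝ F]

theorem isBigO_sub_pow_succ_of_hasFDerivAt {φ : E → F} {φ' : E → E →L[ℝ] F} {x₀ : E} {n : ℕ}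
    (hφ : ∀ᶠ x in 𝓝 x₀, HasFDerivAt φ (φ' x) x)
    (hφ' : φ' =O[𝓝 x₀] fun x => ‖x - x₀‖ ^ n) :
    (fun x => φ x - φ x₀) =O[𝓝 x₀] fun x => ‖x - x₀‖ ^ (n + 1) := by
  obtain ⟨c, hc, hcφ'⟩ := hφ'.exists_pos
  obtain ⟨r, hr, hball⟩ := eventually_nhds_iff_ball.1 (hφ.and hcφ'.bound)
  refine IsBigO.of_bound c ?_
  filter_upwards [ball_mem_nhds x₀ hr] with x hx
  have hseg : segment ℝ x₀ x ⊆ ball x₀ r := (convex_ball x₀ r).segment_subset (mem_ball_self hr) hx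
  have hmvt := (convex_segment x₀ x).norm_image_sub_le_of_norm_hasFDerivWithin_le
    (C := c * ‖x - x₀‖ ^ n)
    (fun y hy => (hball y (hseg hy)).1.hasFDerivWithinAt)
    (fun y hy => ((hball y (hseg hy)).2.trans (by
      simp only [norm_pow, norm_norm]
      gcongr
      exact norm_sub_le_of_mem_segment hy)))
    (left_mem_segment ℝ x₀ x) (right_mem_segment ℝ x₀ x)
  simpa [pow_succ, mul_assoc] using hmvt

variable {f : E → F} {x : E}

theorem ContDiffAt.isBigO_fderiv_taylor_remainder (hf : ContDiffAt ℝ 3 f x) :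
    (fun y => fderiv ℝ f y - fderiv ℝ f x - fderiv ℝ (fderiv ℝ f) x (y - x))
      =O[𝓝 x] fun y => ‖y - x‖ ^ 2 := by
  have hderiv : ∀ᶠ y in 𝓝 x, HasFDerivAt
      (fun y => fderiv ℝ f y - fderiv ℝ f x - fderiv ℝ (fderiv ℝ f) x (y - x))
      (fderiv ℝ (fderiv ℝ f) y - fderiv ℝ (fderiv ℝ f) x) y := by
    filter_upwards [hf.eventually (by simp)] with y hy
    have hDf : DifferentiableAt ℝ (fderiv ℝ f) y :=
      (hy.fderiv_right (m := 1) (by norm_num)).differentiableAt one_ne_zero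
    exact (hDf.hasFDerivAt.sub_const _).sub
      ((fderiv ℝ (fderiv ℝ f) x).hasFDerivAt.comp y ((hasFDerivAt_id y).sub_const x) :)
  have hD2f : DifferentiableAt ℝ (fderiv ℝ (fderiv ℝ f)) x :=
    (hf.fderiv_right (m := 2) (by norm_num)).fderiv_right (m := 1) (by norm_num)
      |>.differentiableAt one_ne_zero
  simpa using isBigO_sub_pow_succ_of_hasFDerivAt hderiv (n := 1)
    (by simpa using hD2f.isBigO_sub.norm_right)

theorem ContDiffAt.isBigO_taylor_remainder_two (hf : ContDiffAt ℝ 3 f x) :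
    (fun y => f y - f x - fderiv ℝ f x (y - x)
        - (2 : ℝ)⁻¹ • fderiv ℝ (fderiv ℝ f) x (y - x) (y - x))
      =O[𝓝 x] fun y => ‖y - x‖ ^ 3 := by
  set D2 := fderiv ℝ (fderiv ℝ f) x
  have hsymm : ∀ v w, D2 v w = D2 w v := hf.isSymmSndFDerivAt (by norm_num)
  have hderiv : ∀ᶠ y in 𝓝 x, HasFDerivAt
      (fun y => f y - f x - fderiv ℝ f x (y - x) - (2 : ℝ)⁻¹ • D2 (y - x) (y - x))
      (fderiv ℝ f y - fderiv ℝ f x - D2 (y - x)) y := by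
    filter_upwards [hf.eventually (by simp)] with y hy
    have hsub : HasFDerivAt (fun y => y - x) (ContinuousLinearMap.id ℝ E) y :=
      (hasFDerivAt_id y).sub_const x
    have hquad : HasFDerivAt (fun y => D2 (y - x) (y - x)) (D2 (y - x) + D2.flip (y - x)) y := by
      simpa using (D2.hasFDerivAt.comp y hsub).clm_apply hsub
    -- by symmetry of `D2`, the derivative of `½ D2 (y - x) (y - x)` is `D2 (y - x)`
    convert (((hy.differentiableAt (by norm_num)).hasFDerivAt.sub_const (f x)).sub
      ((fderiv ℝ f x).hasFDerivAt.comp y hsub :)).sub (hquad.const_smul (2 : ℝ)⁻¹) using 1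
    · rfl
    ext w
    simp only [sub_apply, smul_apply, add_apply, ContinuousLinearMap.flip_apply,
      ContinuousLinearMap.comp_id, hsymm w (y - x)]
    module
  simpa using isBigO_sub_pow_succ_of_hasFDerivAt hderiv (n := 2)
    hf.isBigO_fderiv_taylor_remainder

end

theorem stmt2_general (d : ℕ) (h : EuclideanSpace ℝ (Fin d) → ℝ) (hh : ContDiff ℝ 3 h)
    (p : EuclideanSpace ℝ (Fin d)) (α : ℝ) :
    Asymptotics.IsBigO (nhds (0 : EuclideanSpace ℝ (Fin d)))
      (fun v : EuclideanSpace ℝ (Fin d) =>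
        h p - (1 - α) * h (p + α • v) - α * h (p - (1 - α) • v)
          + (α * (1 - α) / 2) * iteratedFDeriv ℝ 2 h p ![v, v])
      (fun v => ‖v‖ ^ 3) := by
  set R := fun y => h y - h p - fderiv ℝ h p (y - p)
    - (2 : ℝ)⁻¹ • fderiv ℝ (fderiv ℝ h) p (y - p) (y - p)
  have hR : R =O[𝓝 p] fun y => ‖y - p‖ ^ 3 := hh.contDiffAt.isBigO_taylor_remainder_two
  have hsplit : ∀ v : EuclideanSpace ℝ (Fin d),
      h p - (1 - α) * h (p + α • v) - α * h (p - (1 - α) • v)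
          + (α * (1 - α) / 2) * iteratedFDeriv ℝ 2 h p ![v, v]
        = -(1 - α) * R (p + α • v) - α * R (p + (-(1 - α)) • v) := by
    intro v
    simp only [R, iteratedFDeriv_two_apply, add_sub_cancel_left, map_smul, smul_apply,
      smul_eq_mul, Matrix.cons_val_zero, Matrix.cons_val_one, neg_smul, ← sub_eq_add_neg,
      sub_sub_cancel_left, map_neg, neg_apply]
    ring
  simp only [hsplit]
  exact ((hR.comp_add_smul α).const_mul_left _).sub ((hR.comp_add_smul _).const_mul_left _)

/-- Asymptotic form of Proposition 1: for a `C³` function `h : ℝ^d → ℝ`, fixed `p` and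
`α ∈ [0,1]`, the quantity
`h(p) - (1-α)h(p+αv) - αh(p-(1-α)v) + (α(1-α)/2)·D²_v h(p)` is `O(‖v‖³)` as `v → 0`. -/
theorem stmt2 (d : ℕ) (h : EuclideanSpace ℝ (Fin d) → ℝ) (hh : ContDiff ℝ 3 h)
    (p : EuclideanSpace ℝ (Fin d)) (α : ℝ) (hα : α ∈ Set.Icc (0 : ℝ) 1) :
    Asymptotics.IsBigO (nhds (0 : EuclideanSpace ℝ (Fin d)))
      (fun v : EuclideanSpace ℝ (Fin d) =>
        h p - (1 - α) * h (p + α • v) - α * h (p - (1 - α) • v)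
          + (α * (1 - α) / 2) * iteratedFDeriv ℝ 2 h p ![v, v])
      (fun v => ‖v‖ ^ 3) :=
  stmt2_general d h hh p α
end

section
/- Let h : ℝ^d → ℝ be three times continuously differentiable on an open convex set U, and suppose the operator norm of the third iterated Fréchet derivative of h is bounded by M on U. Then for all x_a, x_b ∈ U and all α ∈ [0,1], writing x_c := (1−α)·x_a + α·x_b and v := x_a − x_b, one has |h(x_c) − (1−α)·h(x_a) − α·h(x_b) + (α(1−α)/2)·D²_v h(x_c)| ≤ (M/6)·‖v‖³. -/
/-!
Restrict `h` to the line through `x_c` in direction `v`. Taylor's theorem at `x_c`, with the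
mean-value bound `M ‖w‖³ / 2` on the remainder, expands `h` at `x_a = x_c + α v` and at
`x_b = x_c + (α - 1) v`. In the combination `(1 - α) h(x_a) + α h(x_b)` the first-order terms
cancel, the second-order terms add up to `α (1 - α) / 2 · D²_v h(x_c)`, and the remainders to at
most `M/2 · ((1 - α) α³ + α (1 - α)³) ‖v‖³ ≤ M/16 · ‖v‖³`.
-/

open Set

theorem ContinuousMultilinearMap.map_fun_const_smul {E F : Type*} [NormedAddCommGroup E]
    [NormedSpace ℝ E] [NormedAddCommGroup F] [NormedSpace ℝ F] {k : ℕ}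
    (g : ContinuousMultilinearMap ℝ (fun _ : Fin k => E) F) (t : ℝ) (v : E) :
    g (fun _ => t • v) = t ^ k • g (fun _ => v) := by
  simp [g.map_smul_univ (fun _ => t) (fun _ => v)]

section LineRestriction

variable {E F : Type*} [NormedAddCommGroup E] [NormedSpace ℝ E]
  [NormedAddCommGroup F] [NormedSpace ℝ F]
  {f : E → F} {U : Set E} {s : Set ℝ} {c w : E} {n : WithTop ℕ∞}

theorem hasDerivWithinAt_iteratedFDerivWithin_line (hf : ContDiffOn ℝ n f U)
    (hU : UniqueDiffOn ℝ U) (hs : MapsTo (fun t : ℝ => c + t • w) s U) {k : ℕ} (hk : k < n)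
    {t : ℝ} (ht : t ∈ s) :
    HasDerivWithinAt (fun u : ℝ => iteratedFDerivWithin ℝ k f U (c + u • w) (fun _ => w))
      (iteratedFDerivWithin ℝ (k + 1) f U (c + t • w) (fun _ => w)) s t := by
  have hline : HasDerivWithinAt (fun u : ℝ => c + u • w) w s t := by
    simpa using ((hasDerivAt_id t).smul_const w).const_add c |>.hasDerivWithinAt
  have hD : HasDerivWithinAt (fun u : ℝ => iteratedFDerivWithin ℝ k f U (c + u • w))
      (fderivWithin ℝ (iteratedFDerivWithin ℝ k f U) U (c + t • w) w) s t :=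
    ((hf.differentiableOn_iteratedFDerivWithin hk hU) _ (hs ht)).hasFDerivWithinAt
      |>.comp_hasDerivWithinAt t hline hs
  rw [iteratedFDerivWithin_succ_apply_left]
  exact (ContinuousMultilinearMap.apply ℝ (fun _ : Fin k => E) F
    (fun _ => w)).hasFDerivAt.comp_hasDerivWithinAt t hD

theorem iteratedDerivWithin_comp_line (hf : ContDiffOn ℝ n f U) (hU : UniqueDiffOn ℝ U)
    (hs' : UniqueDiffOn ℝ s) (hs : MapsTo (fun t : ℝ => c + t • w) s U) {k : ℕ}
    (hk : k ≤ n) {t : ℝ} (ht : t ∈ s) :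
    iteratedDerivWithin k (fun u => f (c + u • w)) s t =
      iteratedFDerivWithin ℝ k f U (c + t • w) (fun _ => w) := by
  induction k generalizing t with
  | zero => simp
  | succ k ih =>
    have hk' : (k : WithTop ℕ∞) < n :=
      lt_of_lt_of_le (by exact_mod_cast Nat.lt_succ_self k) hk
    rw [iteratedDerivWithin_succ,
      derivWithin_congr (fun u hu => ih hk'.le hu) (ih hk'.le ht)]
    exact (hasDerivWithinAt_iteratedFDerivWithin_line hf hU hs hk' ht).derivWithin (hs' t ht)

theorem norm_sub_taylor_two_le (hU : UniqueDiffOn ℝ U) (hUc : Convex ℝ U)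
    (hf : ContDiffOn ℝ 3 f U) {M : ℝ} (hM : ∀ x ∈ U, ‖iteratedFDerivWithin ℝ 3 f U x‖ ≤ M)
    (hc : c ∈ U) (hcw : c + w ∈ U) :
    ‖f (c + w) - f c - iteratedFDerivWithin ℝ 1 f U c (fun _ => w)
        - (1 / 2 : ℝ) • iteratedFDerivWithin ℝ 2 f U c (fun _ => w)‖ ≤ M * ‖w‖ ^ 3 / 2 := by
  have hs : MapsTo (fun t : ℝ => c + t • w) (Icc 0 1) U := fun t ht => hUc.add_smul_mem hc hcw ht
  have hs' : UniqueDiffOn ℝ (Icc (0 : ℝ) 1) := uniqueDiffOn_Icc zero_lt_one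
  have hg : ContDiffOn ℝ 3 (fun t : ℝ => f (c + t • w)) (Icc 0 1) :=
    hf.comp (contDiff_const.add (contDiff_id.smul contDiff_const)).contDiffOn hs
  have hderiv {k : ℕ} (hk : k ≤ 3) {t : ℝ} (ht : t ∈ Icc (0 : ℝ) 1) :=
    iteratedDerivWithin_comp_line hf hU hs' hs (by exact_mod_cast hk) ht
  have hbound : ∀ t ∈ Icc (0 : ℝ) 1,
      ‖iteratedDerivWithin 3 (fun t : ℝ => f (c + t • w)) (Icc 0 1) t‖ ≤ M * ‖w‖ ^ 3 := by
    intro t ht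
    rw [hderiv le_rfl ht]
    calc _ ≤ ‖iteratedFDerivWithin ℝ 3 f U (c + t • w)‖ * ∏ _ : Fin 3, ‖w‖ :=
          ContinuousMultilinearMap.le_opNorm _ _
      _ ≤ M * ‖w‖ ^ 3 := by
          rw [Finset.prod_const, Finset.card_fin]
          gcongr
          exact hM _ (hs ht)
  have htaylor := taylor_mean_remainder_bound zero_le_one hg (right_mem_Icc.2 zero_le_one) hbound
  have h0 : (0 : ℝ) ∈ Icc 0 1 := left_mem_Icc.2 zero_le_one
  simp only [taylor_within_apply, Finset.sum_range_succ, Finset.sum_range_zero,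
    hderiv (k := 0) (by norm_num) h0, hderiv (k := 1) (by norm_num) h0,
    hderiv (k := 2) (by norm_num) h0] at htaylor
  convert htaylor using 2 <;> simp [sub_sub]

theorem norm_sub_taylor_two_smul_le (hU : UniqueDiffOn ℝ U) (hUc : Convex ℝ U)
    (hf : ContDiffOn ℝ 3 f U) {M : ℝ} (hM : ∀ x ∈ U, ‖iteratedFDerivWithin ℝ 3 f U x‖ ≤ M)
    {v : E} {t : ℝ} (hc : c ∈ U) (hct : c + t • v ∈ U) :
    ‖f (c + t • v) - f c - t • iteratedFDerivWithin ℝ 1 f U c (fun _ => v)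
        - (t ^ 2 / 2) • iteratedFDerivWithin ℝ 2 f U c (fun _ => v)‖
      ≤ M / 2 * |t| ^ 3 * ‖v‖ ^ 3 := by
  have h := norm_sub_taylor_two_le hU hUc hf hM hc hct
  rw [ContinuousMultilinearMap.map_fun_const_smul, ContinuousMultilinearMap.map_fun_const_smul,
    norm_smul, Real.norm_eq_abs, mul_pow] at h
  convert h using 2
  · module
  · ring

end LineRestriction

theorem abs_convex_combination_le {α K a b : ℝ} (hα : α ∈ Icc (0 : ℝ) 1) (hK : 0 ≤ K)
    (ha : |a| ≤ K * α ^ 3) (hb : |b| ≤ K * (1 - α) ^ 3) :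
    |(1 - α) * a + α * b| ≤ K / 8 := by
  obtain ⟨hα0, hα1⟩ := hα
  -- the left side is `p (1 - 2 p)` with `p = α (1 - α)`
  have hweights : (1 - α) * α ^ 3 + α * (1 - α) ^ 3 ≤ 1 / 8 := by
    nlinarith [sq_nonneg (α * (1 - α) - 1 / 4)]
  calc |(1 - α) * a + α * b| ≤ (1 - α) * |a| + α * |b| := by
        refine (abs_add_le _ _).trans_eq ?_
        rw [abs_mul, abs_mul, abs_of_nonneg (sub_nonneg.2 hα1), abs_of_nonneg hα0]
    _ ≤ (1 - α) * (K * α ^ 3) + α * (K * (1 - α) ^ 3) := by gcongr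
    _ ≤ K / 8 := by nlinarith

/-- Explicit-constant version of Proposition 1: if `h` is `C³` on an open convex set `U`
with third derivative bounded in operator norm by `M`, then the local linear approximation
error plus `(α(1-α)/2)·D²_v h(x_c)` is bounded by `(M/6)‖v‖³`, with `v = x_a - x_b`. -/
theorem stmt3 (d : ℕ) (U : Set (EuclideanSpace ℝ (Fin d))) (hU : IsOpen U)
    (hUc : Convex ℝ U) (h : EuclideanSpace ℝ (Fin d) → ℝ) (hh : ContDiffOn ℝ 3 h U)
    (M : ℝ) (hM : ∀ x ∈ U, ‖iteratedFDerivWithin ℝ 3 h U x‖ ≤ M) :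
    ∀ xa ∈ U, ∀ xb ∈ U, ∀ α ∈ Set.Icc (0 : ℝ) 1,
      |h ((1 - α) • xa + α • xb) - (1 - α) * h xa - α * h xb
          + (α * (1 - α) / 2) *
              iteratedFDerivWithin ℝ 2 h U ((1 - α) • xa + α • xb) ![xa - xb, xa - xb]|
        ≤ M / 6 * ‖xa - xb‖ ^ 3 := by
  intro xa hxa xb hxb α hα
  set v := xa - xb
  set c := (1 - α) • xa + α • xb
  have hcU : c ∈ U := hUc hxa hxb (sub_nonneg.2 hα.2) hα.1 (sub_add_cancel 1 α)
  have hca : c + α • v = xa := by module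
  have hcb : c + (α - 1) • v = xb := by module
  have ha := norm_sub_taylor_two_smul_le hU.uniqueDiffOn hUc hh hM hcU (hca ▸ hxa)
  have hb := norm_sub_taylor_two_smul_le hU.uniqueDiffOn hUc hh hM hcU (hcb ▸ hxb)
  rw [hca, abs_of_nonneg hα.1] at ha
  rw [hcb, abs_sub_comm, abs_of_nonneg (sub_nonneg.2 hα.2)] at hb
  simp only [Real.norm_eq_abs, smul_eq_mul] at ha hb
  have hvv : ![v, v] = fun _ => v := by simp [Matrix.vec_single_eq_const, Matrix.vecCons_const]
  rw [hvv, ← abs_neg]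
  have hM0 : 0 ≤ M := (norm_nonneg _).trans (hM xa hxa)
  set A := iteratedFDerivWithin ℝ 1 h U c (fun _ => v)
  set B := iteratedFDerivWithin ℝ 2 h U c (fun _ => v)
  calc _ = |(1 - α) * (h xa - h c - α * A - α ^ 2 / 2 * B)
          + α * (h xb - h c - (α - 1) * A - (α - 1) ^ 2 / 2 * B)| := by congr 1; ring
    _ ≤ M / 2 * ‖v‖ ^ 3 / 8 :=
        abs_convex_combination_le hα (by positivity) (by linarith [ha]) (by linarith [hb])
    _ ≤ M / 6 * ‖v‖ ^ 3 := by nlinarith [pow_nonneg (norm_nonneg v) 3]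
end

section
/- Let h : ℝ^d → ℝ be four times continuously differentiable (class C⁴), let p ∈ ℝ^d and α ∈ [0,1] be fixed. Then the function v ↦ h(p) − (1−α)·h(p + α·v) − α·h(p − (1−α)·v) + (α(1−α)/2)·D²_v h(p) − (α(1−α)(1−2α)/6)·D³_v h(p) is O(‖v‖⁴) as v → 0, where D³_v h(p) denotes the third iterated Fréchet derivative of h at p evaluated at (v, v, v), i.e. Σ_{j,k,l} v_j v_k v_l ∂³h(p)/∂x_j∂x_k∂x_l. -/
open Set Asymptotics Filter Topology Metric
open scoped Nat

section aux

variable {E : Type*} [NormedAddCommGroup E] [NormedSpace ℝ E]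

private lemma iterWithin_eq {f : ℝ → ℝ} {n : ℕ} (hf : ContDiff ℝ n f)
    {s : Set ℝ} (hs : UniqueDiffOn ℝ s) {k : ℕ} (hk : k ≤ n) {x : ℝ} (hx : x ∈ s) :
    iteratedDerivWithin k f s x = iteratedDeriv k f x := by
  rw [iteratedDerivWithin_eq_iteratedFDerivWithin, iteratedDeriv_eq_iteratedFDeriv]
  have hf' : ContDiff ℝ ((n : ℕ∞) : WithTop ℕ∞) f := by exact_mod_cast hf
  have H : HasFTaylorSeriesUpToOn (n : ℕ∞) f (ftaylorSeries ℝ f) s :=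
    ((hasFTaylorSeriesUpToOn_univ_iff).2 (contDiff_iff_ftaylorSeries.mp hf')).mono (subset_univ s)
  have hk' : (k : WithTop ℕ∞) ≤ ((n : ℕ∞) : WithTop ℕ∞) := by exact_mod_cast hk
  rw [← H.eq_iteratedFDerivWithin_of_uniqueDiffOn hk' hs hx]
  rfl

private lemma lineDeriv_eq {h : E → ℝ} {N : ℕ} (hh : ContDiff ℝ N h) (p w : E) :
    ∀ k : ℕ, k ≤ N → ∀ t : ℝ,
      iteratedDeriv k (fun t : ℝ => h (p + t • w)) t
        = iteratedFDeriv ℝ k h (p + t • w) (fun _ => w) := by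
  intro k
  induction k with
  | zero =>
    intro _ t
    simp [iteratedDeriv_zero, iteratedFDeriv_zero_apply]
  | succ k IH =>
    intro hk t
    have hk' : k ≤ N := le_trans k.le_succ hk
    rw [iteratedDeriv_succ]
    have hcongr : iteratedDeriv k (fun t : ℝ => h (p + t • w))
        = fun t : ℝ => ContinuousMultilinearMap.apply ℝ (fun _ : Fin k => E) ℝ (fun _ => w)
            (iteratedFDeriv ℝ k h (p + t • w)) := by
      funext t; exact IH hk' t
    rw [hcongr]
    have hγ : HasDerivAt (fun t : ℝ => p + t • w) w t := by
      simpa using ((hasDerivAt_id t).smul_const w).const_add p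
    have hklt : (k : WithTop ℕ∞) < (N : WithTop ℕ∞) := by exact_mod_cast lt_of_lt_of_le (Nat.lt_succ_self k) hk
    have hG : HasFDerivAt (iteratedFDeriv ℝ k h)
        (fderiv ℝ (iteratedFDeriv ℝ k h) (p + t • w)) (p + t • w) :=
      ((hh.differentiable_iteratedFDeriv hklt) _).hasFDerivAt
    have hcomp : HasDerivAt (fun t : ℝ => iteratedFDeriv ℝ k h (p + t • w))
        (fderiv ℝ (iteratedFDeriv ℝ k h) (p + t • w) w) t := hG.comp_hasDerivAt t hγ
    have hfinal := ((ContinuousMultilinearMap.apply ℝ (fun _ : Fin k => E) ℝ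
        (fun _ => w)).hasFDerivAt.comp_hasDerivAt t hcomp)
    have hderiv : deriv (fun t : ℝ => ContinuousMultilinearMap.apply ℝ (fun _ : Fin k => E) ℝ
        (fun _ => w) (iteratedFDeriv ℝ k h (p + t • w))) t
        = ContinuousMultilinearMap.apply ℝ (fun _ : Fin k => E) ℝ (fun _ => w)
            ((fderiv ℝ (iteratedFDeriv ℝ k h) (p + t • w)) w) := by
      simpa [Function.comp_def] using hfinal.deriv
    rw [hderiv]
    simp only [ContinuousLinearMap.coe_comp', Function.comp_apply,
      ContinuousMultilinearMap.apply_apply]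
    rw [fderiv_iteratedFDeriv]
    simp only [Function.comp_apply, continuousMultilinearCurryLeftEquiv_apply]
    congr 1
    funext i
    refine Fin.cases rfl (fun j => rfl) i

/-- Fourth-order Taylor remainder bound. -/
private lemma taylor4 {h : E → ℝ} (hh : ContDiff ℝ 4 h) (p : E) [ProperSpace E] :
    (fun w : E => h (p + w)
        - ∑ k ∈ Finset.range 4, ((k ! : ℝ)⁻¹) * iteratedFDeriv ℝ k h p (fun _ => w))
      =O[𝓝 (0 : E)] (fun w => ‖w‖ ^ 4) := by
  obtain ⟨M, hM⟩ := (isCompact_closedBall p 1).exists_bound_of_continuousOn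
    ((hh.continuous_iteratedFDeriv (n := 4) le_rfl).continuousOn
      (s := closedBall p 1) (f := iteratedFDeriv ℝ 4 h))
  rw [isBigO_iff]
  refine ⟨M / 6, ?_⟩
  have hball : closedBall (0 : E) 1 ∈ 𝓝 (0 : E) := closedBall_mem_nhds 0 one_pos
  filter_upwards [hball] with w hw
  have hw1 : ‖w‖ ≤ 1 := by simpa using hw
  set q : ℝ → ℝ := fun t => h (p + t • w) with hqdef
  have hq : ContDiff ℝ 4 q :=
    hh.comp (contDiff_const.add (contDiff_id.smul contDiff_const))
  have hUD : UniqueDiffOn ℝ (Icc (0:ℝ) 1) := uniqueDiffOn_Icc one_pos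
  have hiter : ∀ k : ℕ, k ≤ 4 → ∀ y ∈ Icc (0:ℝ) 1,
      iteratedDerivWithin k q (Icc (0:ℝ) 1) y = iteratedFDeriv ℝ k h (p + y • w) (fun _ => w) :=
    fun k hk y hy => (iterWithin_eq hq hUD hk hy).trans (lineDeriv_eq hh p w k hk y)
  have hbound := taylor_mean_remainder_bound (f := q) (a := 0) (b := 1) (x := 1) (n := 3) (C := M * ‖w‖ ^ 4)
    zero_le_one (by exact_mod_cast hq.contDiffOn) (right_mem_Icc.2 zero_le_one) ?_
  · have htay : taylorWithinEval q 3 (Icc (0:ℝ) 1) 0 1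
        = ∑ k ∈ Finset.range 4, ((k ! : ℝ)⁻¹) * iteratedFDeriv ℝ k h p (fun _ => w) := by
      rw [taylor_within_apply]
      refine Finset.sum_congr rfl fun k hk => ?_
      have hk4 : k ≤ 4 := le_trans (Nat.lt_succ_iff.mp (Finset.mem_range.mp hk)) (by norm_num)
      rw [hiter k hk4 0 (left_mem_Icc.2 zero_le_one)]
      simp [smul_eq_mul, div_eq_mul_inv]
    have hq1 : q 1 = h (p + w) := by simp [hqdef]
    rw [htay, hq1] at hbound
    calc ‖h (p + w) - ∑ k ∈ Finset.range 4, ((k ! : ℝ)⁻¹) * iteratedFDeriv ℝ k h p (fun _ => w)‖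
        ≤ M * ‖w‖ ^ 4 * (1 - 0) ^ (3 + 1) / (3 : ℕ)! := hbound
      _ ≤ M / 6 * ‖‖w‖ ^ 4‖ := by
          rw [Real.norm_of_nonneg (by positivity)]
          norm_num [Nat.factorial]
          ring_nf
          nlinarith [norm_nonneg w, pow_nonneg (norm_nonneg w) 4]
  · intro y hy
    have : iteratedDerivWithin (3 + 1) q (Icc (0:ℝ) 1) y
        = iteratedFDeriv ℝ 4 h (p + y • w) (fun _ => w) := hiter 4 le_rfl y hy
    rw [this]
    have hx : p + y • w ∈ closedBall p 1 := by
      simp only [mem_closedBall, dist_self_add_left]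
      calc ‖y • w‖ = |y| * ‖w‖ := by rw [norm_smul, Real.norm_eq_abs]
        _ ≤ 1 * 1 := by
            refine mul_le_mul ?_ hw1 (norm_nonneg w) zero_le_one
            rcases hy with ⟨h0, h1⟩
            rw [abs_of_nonneg h0]; exact h1
        _ = 1 := one_mul 1
    calc ‖iteratedFDeriv ℝ 4 h (p + y • w) (fun _ => w)‖
        ≤ ‖iteratedFDeriv ℝ 4 h (p + y • w)‖ * ∏ _i : Fin 4, ‖w‖ :=
          (iteratedFDeriv ℝ 4 h (p + y • w)).le_opNorm _
      _ ≤ M * ‖w‖ ^ 4 := by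
          rw [Finset.prod_const]
          simp only [Finset.card_univ, Fintype.card_fin]
          exact mul_le_mul_of_nonneg_right (hM _ hx) (by positivity)

private lemma taylor4_scaled {h : E → ℝ} (hh : ContDiff ℝ 4 h) (p : E) [ProperSpace E] (s : ℝ) :
    (fun v : E => h (p + s • v)
        - ∑ k ∈ Finset.range 4, ((k ! : ℝ)⁻¹) * s ^ k * iteratedFDeriv ℝ k h p (fun _ => v))
      =O[𝓝 (0 : E)] (fun v => ‖v‖ ^ 4) := by
  have hcont : Tendsto (fun v : E => s • v) (𝓝 0) (𝓝 0) := by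
    simpa using ((continuous_const_smul s).tendsto (0 : E))
  have H := (taylor4 hh p).comp_tendsto hcont
  have heq : (fun v : E => h (p + s • v)
        - ∑ k ∈ Finset.range 4, ((k ! : ℝ)⁻¹) * s ^ k * iteratedFDeriv ℝ k h p (fun _ => v))
      = ((fun w : E => h (p + w)
        - ∑ k ∈ Finset.range 4, ((k ! : ℝ)⁻¹) * iteratedFDeriv ℝ k h p (fun _ => w))
          ∘ (fun v : E => s • v)) := by
    funext v
    simp only [Function.comp_apply]
    congr 1
    refine Finset.sum_congr rfl fun k _ => ?_
    have : iteratedFDeriv ℝ k h p (fun _ => s • v)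
        = s ^ k • iteratedFDeriv ℝ k h p (fun _ => v) := by
      simpa [Finset.prod_const] using
        (iteratedFDeriv ℝ k h p).map_smul_univ (fun _ : Fin k => s) (fun _ => v)
    rw [this, smul_eq_mul]; ring
  rw [heq]
  refine H.trans ?_
  have : (fun v : E => ‖s • v‖ ^ 4) = fun v : E => |s| ^ 4 * ‖v‖ ^ 4 := by
    funext v; rw [norm_smul, Real.norm_eq_abs, mul_pow]
  rw [Function.comp_def]
  simp only [this]
  exact (isBigO_refl _ _).const_mul_left _

end aux

/-- Refined third-order expansion inside the proof of Proposition 1: for a `C⁴` function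
`h : ℝ^d → ℝ`, fixed `p` and `α ∈ [0,1]`, the quantity
`h(p) - (1-α)h(p+αv) - αh(p-(1-α)v) + (α(1-α)/2)·D²_v h(p) - (α(1-α)(1-2α)/6)·D³_v h(p)`
is `O(‖v‖⁴)` as `v → 0`. -/
theorem stmt4 (d : ℕ) (h : EuclideanSpace ℝ (Fin d) → ℝ) (hh : ContDiff ℝ 4 h)
    (p : EuclideanSpace ℝ (Fin d)) (α : ℝ) (hα : α ∈ Set.Icc (0 : ℝ) 1) :
    Asymptotics.IsBigO (nhds (0 : EuclideanSpace ℝ (Fin d)))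
      (fun v : EuclideanSpace ℝ (Fin d) =>
        h p - (1 - α) * h (p + α • v) - α * h (p - (1 - α) • v)
          + (α * (1 - α) / 2) * iteratedFDeriv ℝ 2 h p ![v, v]
          - (α * (1 - α) * (1 - 2 * α) / 6) * iteratedFDeriv ℝ 3 h p ![v, v, v])
      (fun v => ‖v‖ ^ 4) := by
  have Ha := taylor4_scaled hh p α
  have Hb := taylor4_scaled hh p (-(1 - α))
  have Hcomb := (Ha.const_mul_left (-(1 - α))).add (Hb.const_mul_left (-α))
  refine Hcomb.congr_left fun v => ?_
  have hsum : ∀ s : ℝ,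
      ∑ k ∈ Finset.range 4, ((k ! : ℝ)⁻¹) * s ^ k * iteratedFDeriv ℝ k h p (fun _ => v)
      = h p + s * iteratedFDeriv ℝ 1 h p (fun _ => v)
        + s ^ 2 / 2 * iteratedFDeriv ℝ 2 h p (fun _ => v)
        + s ^ 3 / 6 * iteratedFDeriv ℝ 3 h p (fun _ => v) := by
    intro s
    rw [Finset.sum_range_succ, Finset.sum_range_succ, Finset.sum_range_succ,
      Finset.sum_range_one]
    simp [Nat.factorial, iteratedFDeriv_zero_apply]
    ring
  have h2 : (![v, v] : Fin 2 → EuclideanSpace ℝ (Fin d)) = fun _ => v := by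
    funext i; fin_cases i <;> rfl
  have h3 : (![v, v, v] : Fin 3 → EuclideanSpace ℝ (Fin d)) = fun _ => v := by
    funext i; fin_cases i <;> rfl
  have hb : p - (1 - α) • v = p + (-(1 - α)) • v := by
    rw [neg_smul, ← sub_eq_add_neg]
  rw [hb, h3, h2, hsum α, hsum (-(1 - α))]
  ring
end

section
/- Let h : ℝ^d → ℝ be six times continuously differentiable (class C⁶) and let p ∈ ℝ^d be fixed. Then the function v ↦ −(1/12)·h(p + v/2) + (4/3)·h(p + v/4) − (5/2)·h(p) + (4/3)·h(p − v/4) − (1/12)·h(p − v/2) − (1/16)·D²_v h(p) is O(‖v‖⁶) as v → 0; that is, the five-point combination −(1/12)h(x_a) + (4/3)h(x_c) − (5/2)h(x_d) + (4/3)h(x_e) − (1/12)h(x_b), with x_d = (x_a+x_b)/2 = p, x_c = (3x_a+x_b)/4, x_e = (x_a+3x_b)/4 and v = x_a − x_b, equals (1/16)·D²_v h(x_d) up to a sixth-order error. -/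
/-!
Taylor's formula with integral remainder, `f (x + y) = ∑_{k ≤ n} D^k f(x) y^k / k! + O(‖y‖^(n+1))`,
applied along the four rays `p + c • v`, `c = ±1/2, ±1/4`, reduces the claim to an identity between
the stencil weights: they annihilate the moments of orders `0, 1, 3, 4, 5` (the odd ones by
symmetry) and give `1/16` at order `2`.
-/

open Asymptotics Filter Metric Nat Topology Interval

section TaylorRemainder

variable {E F : Type*} [NormedAddCommGroup E] [NormedSpace ℝ E]
  [NormedAddCommGroup F] [NormedSpace ℝ F] [CompleteSpace F]

theorem ContDiffAt.isBigO_sub_sum_iteratedFDeriv {f : E → F} {x : E} {n : ℕ}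
    (hf : ContDiffAt ℝ (n + 1) f x) :
    (fun y => f (x + y) -
        ∑ k ∈ Finset.range (n + 1), (k ! : ℝ)⁻¹ • iteratedFDeriv ℝ k f x (fun _ => y))
      =O[𝓝 0] fun y => ‖y‖ ^ (n + 1) := by
  set M := ‖iteratedFDeriv ℝ (n + 1) f x‖ + 1
  obtain ⟨ε, hε, hball⟩ : ∃ ε > 0, ∀ z ∈ ball x ε,
      ContDiffAt ℝ (n + 1) f z ∧ ‖iteratedFDeriv ℝ (n + 1) f z‖ < M :=
    eventually_nhds_iff_ball.mp <| (hf.eventually (by simp)).and <|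
      (hf.continuousAt_iteratedFDeriv le_rfl).norm.eventually (gt_mem_nhds (lt_add_one _))
  refine IsBigO.of_bound M ?_
  filter_upwards [ball_mem_nhds (0 : E) hε] with y hy
  rw [mem_ball_zero_iff] at hy
  have hsegment : ∀ t ∈ Set.Icc (0 : ℝ) 1, x + t • y ∈ ball x ε := by
    rintro t ⟨ht0, ht1⟩
    rw [mem_ball, dist_self_add_left, norm_smul, Real.norm_of_nonneg ht0]
    nlinarith [norm_nonneg y]
  have hintegrand : ∀ t ∈ Ι (0 : ℝ) 1,
      ‖(1 - t) ^ n • iteratedFDeriv ℝ (n + 1) f (x + t • y) (fun _ => y)‖ ≤ M * ‖y‖ ^ (n + 1) := by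
    intro t ht
    rw [Set.uIoc_of_le zero_le_one] at ht
    obtain ⟨ht0, ht1⟩ := ht
    calc ‖(1 - t) ^ n • iteratedFDeriv ℝ (n + 1) f (x + t • y) (fun _ => y)‖
        ≤ 1 * (‖iteratedFDeriv ℝ (n + 1) f (x + t • y)‖ * ∏ _i : Fin (n + 1), ‖y‖) := by
          rw [norm_smul, norm_pow, Real.norm_of_nonneg (by linarith)]
          gcongr
          · exact pow_le_one₀ (by linarith) (by linarith)
          · exact ContinuousMultilinearMap.le_opNorm _ _
      _ ≤ M * ‖y‖ ^ (n + 1) := by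
          rw [one_mul, Finset.prod_const, Finset.card_univ, Fintype.card_fin]
          gcongr
          exact (hball _ (hsegment t ⟨ht0.le, ht1⟩)).2.le
  rw [map_add_eq_sum_add_integral_iteratedFDeriv fun t ht => (hball _ (hsegment t ht)).1,
    add_sub_cancel_left, norm_smul, Real.norm_of_nonneg (by positivity), norm_pow, norm_norm]
  calc (n ! : ℝ)⁻¹ *
        ‖∫ t in (0 : ℝ)..1, (1 - t) ^ n • iteratedFDeriv ℝ (n + 1) f (x + t • y) (fun _ => y)‖
      ≤ 1 * (M * ‖y‖ ^ (n + 1) * |1 - 0|) := by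
        gcongr
        · exact inv_le_one_of_one_le₀ (by exact_mod_cast n.factorial_pos)
        · exact intervalIntegral.norm_integral_le_of_norm_le_const hintegrand
    _ = M * ‖y‖ ^ (n + 1) := by norm_num

theorem ContDiffAt.isBigO_sub_sum_iteratedFDeriv_smul {f : E → F} {x : E} {n : ℕ}
    (hf : ContDiffAt ℝ (n + 1) f x) (c : ℝ) :
    (fun y => f (x + c • y) -
        ∑ k ∈ Finset.range (n + 1), (k ! : ℝ)⁻¹ • c ^ k • iteratedFDeriv ℝ k f x (fun _ => y))
      =O[𝓝 0] fun y => ‖y‖ ^ (n + 1) := by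
  have hscale : (fun y : E => ‖c • y‖ ^ (n + 1)) =O[𝓝 0] fun y => ‖y‖ ^ (n + 1) :=
    IsBigO.of_bound (|c| ^ (n + 1)) <| Eventually.of_forall fun y => by
      simp [norm_smul, mul_pow]
  refine (((hf.isBigO_sub_sum_iteratedFDeriv).comp_tendsto ?_).trans hscale).congr_left fun y => ?_
  · simpa using (continuous_const_smul c).tendsto' (0 : E) 0 (smul_zero c)
  · simp only [Function.comp_apply, ← Fin.prod_const, ← ContinuousMultilinearMap.map_smul_univ]

end TaylorRemainder

theorem fivePoint_stencil_moments (a : ℕ → ℝ) :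
    -(1 / 12) * ∑ k ∈ Finset.range 6, (k ! : ℝ)⁻¹ • (1 / 2 : ℝ) ^ k • a k
      + (4 / 3) * ∑ k ∈ Finset.range 6, (k ! : ℝ)⁻¹ • (1 / 4 : ℝ) ^ k • a k
      - (5 / 2) * a 0
      + (4 / 3) * ∑ k ∈ Finset.range 6, (k ! : ℝ)⁻¹ • (-(1 / 4) : ℝ) ^ k • a k
      - (1 / 12) * ∑ k ∈ Finset.range 6, (k ! : ℝ)⁻¹ • (-(1 / 2) : ℝ) ^ k • a k
      = (1 / 16) * a 2 := by
  simp only [Finset.sum_range_succ, Finset.sum_range_zero, smul_eq_mul, Nat.factorial]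
  norm_num
  ring

/-- Five-point version (Proposition 2, corrected constant): for a `C⁶` function
`h : ℝ^d → ℝ` and fixed `p`, the five-point combination
`-(1/12)h(p+v/2) + (4/3)h(p+v/4) - (5/2)h(p) + (4/3)h(p-v/4) - (1/12)h(p-v/2)`
equals `(1/16)·D²_v h(p)` up to `O(‖v‖⁶)` as `v → 0`. -/
theorem stmt7 (d : ℕ) (h : EuclideanSpace ℝ (Fin d) → ℝ) (hh : ContDiff ℝ 6 h)
    (p : EuclideanSpace ℝ (Fin d)) :
    Asymptotics.IsBigO (nhds (0 : EuclideanSpace ℝ (Fin d)))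
      (fun v : EuclideanSpace ℝ (Fin d) =>
        -(1 / 12) * h (p + (1 / 2 : ℝ) • v) + (4 / 3) * h (p + (1 / 4 : ℝ) • v)
          - (5 / 2) * h p + (4 / 3) * h (p - (1 / 4 : ℝ) • v)
          - (1 / 12) * h (p - (1 / 2 : ℝ) • v)
          - (1 / 16) * iteratedFDeriv ℝ 2 h p ![v, v])
      (fun v => ‖v‖ ^ 6) := by
  have remainder (c : ℝ) := (hh.contDiffAt (x := p)).isBigO_sub_sum_iteratedFDeriv_smul (n := 5) c
  refine ((((remainder (1 / 2)).const_mul_left (-(1 / 12))).add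
    ((remainder (1 / 4)).const_mul_left (4 / 3))).add
    (((remainder (-(1 / 4))).const_mul_left (4 / 3)).add
    ((remainder (-(1 / 2))).const_mul_left (-(1 / 12))))).congr_left fun v => ?_
  have hsub (c : ℝ) : p - c • v = p + (-c) • v := by rw [neg_smul, sub_eq_add_neg]
  have hpair : ![v, v] = fun _ => v := by ext i; fin_cases i <;> rfl
  have moments := fivePoint_stencil_moments fun k => iteratedFDeriv ℝ k h p fun _ => v
  rw [iteratedFDeriv_zero_apply] at moments
  simp only [hsub, hpair]
  linear_combination -moments
end

section
/- Let f : ℝ × ℝ → ℝ be defined by f(x₁, x₂) = −x₁ − x₂ if 2x₁ − x₂ ≥ 0 and f(x₁, x₂) = −(3/2)·x₂ otherwise, and let x_F = (0, 0). Then f(x_F) = 0, and for every x_a ∈ [0,1] × [0,1] and every α ∈ [0,1], f((1−α)·x_a + α·x_F) = (1−α)·f(x_a) + α·f(x_F); that is, the two-point local, linear approximation error of f with anchor point x_F is identically zero on [0,1]². -/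
/-- Example 1 of the paper: with anchor point `x_F = (0,0)`, the two-point local linear
approximation error of `f` is identically zero on `[0,1]²`: `f(0,0) = 0` and
`f((1-α)x_a + αx_F) = (1-α)f(x_a) + αf(x_F)` for all `x_a ∈ [0,1]²`, `α ∈ [0,1]`. -/
theorem stmt13 (f : ℝ × ℝ → ℝ)
    (hf : ∀ x : ℝ × ℝ, f x = if 0 ≤ 2 * x.1 - x.2 then -x.1 - x.2 else -(3 / 2) * x.2) :
    f (0, 0) = 0 ∧
      ∀ xa ∈ Set.Icc (0 : ℝ) 1 ×ˢ Set.Icc (0 : ℝ) 1, ∀ α ∈ Set.Icc (0 : ℝ) 1,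
        f ((1 - α) • xa + α • ((0 : ℝ), (0 : ℝ)))
          = (1 - α) * f xa + α * f (0, 0) := by
  have h0 : f (0, 0) = 0 := by rw [hf]; norm_num
  refine ⟨h0, ?_⟩
  intro xa hxa α hα
  have ht : (0:ℝ) ≤ 1 - α := by linarith [hα.2]
  have hpt : (1 - α) • xa + α • ((0 : ℝ), (0 : ℝ)) = ((1-α) * xa.1, (1-α) * xa.2) := by
    simp [Prod.ext_iff, Prod.smul_def, smul_eq_mul]
  rw [hpt, h0, hf, hf]
  simp only
  rcases eq_or_lt_of_le ht with h | h
  · rw [← h]; simp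
  · have key : (0 ≤ 2 * ((1-α) * xa.1) - (1-α) * xa.2) ↔ (0 ≤ 2 * xa.1 - xa.2) := by
      constructor <;> intro hh <;> nlinarith
    by_cases hc : 0 ≤ 2 * xa.1 - xa.2
    · rw [if_pos (key.mpr hc), if_pos hc]; ring
    · rw [if_neg (fun hh => hc (key.mp hh)), if_neg hc]; ring
end
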